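/- arXiv:1410.6021 — 3 statements merged into one kernel-verified Lean document; each statement's English description precedes it below -/
import Mathlib

section
/- Let σ : Fin m → (V → V) be the input maps of a homogeneous network, v : V, and suppose every cell of V is reachable from v, i.e. for every w : V there is τ ∈ Σ_N with τ v = w. Then the pullback φ_v* : (V → E) → (↥Σ_N → E), φ_v* x = x ∘ φ_v (where φ_v τ = τ v), is injective; its range equals the synchrony space Syn_{P(v)} = {X : ↥Σ_N → E | ∀ τ ρ : ↥Σ_N, τ v = ρ v → X τ = X ρ}; and Syn_{P(v)} is invariant under the fundamental network map γ̃[f] for every response function f : (Fin m → E) → E. -/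
/-- The network map of a homogeneous network with input maps `σ` and response
function `f`. -/
def networkMap {V E : Type*} {m : ℕ} (σ : Fin m → V → V)
    (f : (Fin m → E) → E) (x : V → E) : V → E :=
  fun v => f (fun j => x (σ j v))

/-- The monoid `Σ_N` of the homogeneous network: the submonoid of
`Function.End V` generated by the input maps. -/
def SigmaN {V : Type*} {m : ℕ} (σ : Fin m → V → V) : Submonoid (Function.End V) :=
  Submonoid.closure (Set.range fun j => (σ j : Function.End V))

/-- The generating input maps belong to `Σ_N`. -/
theorem sigma_mem_SigmaN {V : Type*} {m : ℕ} (σ : Fin m → V → V) (j : Fin m) :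
    (σ j : Function.End V) ∈ SigmaN σ :=
  Submonoid.subset_closure ⟨j, rfl⟩

/-- The input maps of the fundamental network: left composition with the
generators. -/
def σtilde {V : Type*} {m : ℕ} (σ : Fin m → V → V) (j : Fin m)
    (τ : SigmaN σ) : SigmaN σ :=
  ⟨(show Function.End V from σ j) * τ.1, mul_mem (sigma_mem_SigmaN σ j) τ.2⟩

/-- The fundamental network map with response function `f`. -/
def γtilde {V E : Type*} {m : ℕ} (σ : Fin m → V → V)
    (f : (Fin m → E) → E) (X : SigmaN σ → E) : SigmaN σ → E :=
  fun τ => f (fun j => X (σtilde σ j τ))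

/-
Since every cell is reached from `v`, the evaluation map `φ_v : Σ_N → V`, `τ ↦ τ v`, is
surjective. Pulling back along a surjection is injective, and its range consists exactly of the
functions constant on the fibres of `φ_v`, which is `Syn_{P(v)}`. Invariance holds because
`(σ j ∘ τ) v = σ j (τ v)`, so each `σ̃ j` maps fibres of `φ_v` into fibres of `φ_v`.
-/

open Function

theorem Function.Surjective.range_comp_right_eq_setOf_factorsThrough {α β γ : Type*}
    {f : α → β} (hf : Surjective f) :
    Set.range (fun g : β → γ => g ∘ f) = {g | g.FactorsThrough f} := by
  ext g
  constructor
  · rintro ⟨e, rfl⟩ a b hab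
    simp only [comp_apply, hab]
  · intro hg
    exact ⟨g ∘ surjInv hf, funext fun a => hg (surjInv_eq hf (f a))⟩

section FundamentalNetwork

variable {V E : Type*} {m : ℕ} (σ : Fin m → V → V)

theorem surjective_eval_of_reachable {v : V} (hreach : ∀ w : V, ∃ τ ∈ SigmaN σ, τ v = w) :
    Surjective fun τ : SigmaN σ => τ.1 v := fun w =>
  let ⟨τ, hτ, hτv⟩ := hreach w
  ⟨⟨τ, hτ⟩, hτv⟩

theorem σtilde_apply (j : Fin m) (τ : SigmaN σ) (w : V) :
    (σtilde σ j τ).1 w = σ j (τ.1 w) :=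
  rfl

theorem γtilde_factorsThrough_eval (f : (Fin m → E) → E) {X : SigmaN σ → E} (w : V)
    (hX : X.FactorsThrough fun τ : SigmaN σ => τ.1 w) :
    (γtilde σ f X).FactorsThrough fun τ : SigmaN σ => τ.1 w := by
  intro τ ρ hτρ
  have hj : ∀ j, X (σtilde σ j τ) = X (σtilde σ j ρ) := fun j =>
    hX (by simp only [σtilde_apply, hτρ])
  simp only [γtilde, hj]

end FundamentalNetwork

/-- If every cell of `V` is reachable from `v` (i.e. `Σ_N` acts transitively
from `v`), then the pullback of the evaluation fibration `φ_v` is injective,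
its range is the synchrony space `Syn_{P(v)}`, and this synchrony space is
invariant under every fundamental network map. -/
theorem input_network_embedding {V E : Type*} {m : ℕ} (σ : Fin m → V → V)
    (v : V) (hreach : ∀ w : V, ∃ τ ∈ SigmaN σ, τ v = w) :
    Function.Injective (fun x : V → E => fun τ : SigmaN σ => x (τ.1 v)) ∧
    Set.range (fun x : V → E => fun τ : SigmaN σ => x (τ.1 v)) =
      {X : SigmaN σ → E | ∀ τ ρ : SigmaN σ, τ.1 v = ρ.1 v → X τ = X ρ} ∧
    (∀ f : (Fin m → E) → E,
      ∀ X ∈ {X : SigmaN σ → E | ∀ τ ρ : SigmaN σ, τ.1 v = ρ.1 v → X τ = X ρ},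
        γtilde σ f X ∈
          {X : SigmaN σ → E | ∀ τ ρ : SigmaN σ, τ.1 v = ρ.1 v → X τ = X ρ}) := by
  have hsurj := surjective_eval_of_reachable σ hreach
  exact ⟨hsurj.injective_comp_right, hsurj.range_comp_right_eq_setOf_factorsThrough,
    fun f X hX => γtilde_factorsThrough_eval σ f v hX⟩
end

section
/- Let σ : Fin m → (V → V) be the input maps of a homogeneous network and Σ_N the submonoid of Function.End V generated by {σ j | j : Fin m}. For every ρ ∈ Σ_N, the right-multiplication map φ_ρ : ↥Σ_N → ↥Σ_N, φ_ρ τ = τ * ρ, commutes with every input map of the fundamental network: σ̃ j ∘ φ_ρ = φ_ρ ∘ σ̃ j for all j : Fin m (so φ_ρ is a self-fibration of the fundamental network). Consequently every fundamental network map is Σ_N-equivariant: for every type E, every response function f : (Fin m → E) → E, every X : ↥Σ_N → E and every ρ ∈ Σ_N, γ̃[f] (X ∘ φ_ρ) = (γ̃[f] X) ∘ φ_ρ. -/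
theorem σtilde_mul {V : Type*} {m : ℕ} (σ : Fin m → V → V) (j : Fin m) (τ ρ : SigmaN σ) :
    σtilde σ j (τ * ρ) = σtilde σ j τ * ρ :=
  Subtype.ext (mul_assoc _ _ _).symm

theorem γtilde_eq_networkMap {V E : Type*} {m : ℕ} (σ : Fin m → V → V) :
    γtilde (E := E) σ = networkMap (σtilde σ) :=
  rfl

theorem networkMap_comp_of_intertwines {V W E : Type*} {m : ℕ} (σ : Fin m → V → V)
    (σ' : Fin m → W → W) (φ : W → V) (hφ : ∀ j, σ j ∘ φ = φ ∘ σ' j)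
    (f : (Fin m → E) → E) (x : V → E) :
    networkMap σ' f (x ∘ φ) = networkMap σ f x ∘ φ :=
  funext fun w => congrArg f <| funext fun j => congrArg x (congrFun (hφ j) w).symm

/-- For every `ρ ∈ Σ_N`, right multiplication `φ_ρ : τ ↦ τ * ρ` commutes with
all the input maps of the fundamental network (it is a self-fibration), and
consequently every fundamental network map is `Σ_N`-equivariant. -/
theorem fundamental_self_fibrations {V : Type*} {m : ℕ} (σ : Fin m → V → V)
    (ρ : SigmaN σ) :
    (∀ j : Fin m,
        (σtilde σ j) ∘ (fun τ : SigmaN σ => τ * ρ)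
          = (fun τ : SigmaN σ => τ * ρ) ∘ (σtilde σ j)) ∧
    (∀ (E : Type*) (f : (Fin m → E) → E) (X : SigmaN σ → E),
        γtilde σ f (X ∘ fun τ : SigmaN σ => τ * ρ)
          = (γtilde σ f X) ∘ fun τ : SigmaN σ => τ * ρ) := by
  have hfib : ∀ j : Fin m, (σtilde σ j) ∘ (fun τ : SigmaN σ => τ * ρ)
      = (fun τ : SigmaN σ => τ * ρ) ∘ (σtilde σ j) :=
    fun j => funext fun τ => σtilde_mul σ j τ ρ
  refine ⟨hfib, fun E f X => ?_⟩
  rw [γtilde_eq_networkMap]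
  exact networkMap_comp_of_intertwines _ _ _ hfib f X
end

section
/- Let σ : Fin m → (V → V) be the input maps of a homogeneous network, S a set of cells of V, and φS : V → V an interior symmetry of S, i.e. φS v = v for v ∉ S, φS v ∈ S for v ∈ S, and φS (σ j v) = σ j (φS v) for all v ∈ S and all j : Fin m. Let r be the relation on V with r v w ↔ (v ∈ S ∧ w = φS v), and let ≈ be the equivalence closure (EqvGen) of r. Then ≈ is balanced: for every j : Fin m and all v w : V, v ≈ w implies σ j v ≈ σ j w. Consequently, for every type E and every response function f : (Fin m → E) → E, the network map γ[σ,f] preserves the synchrony space {x : V → E | ∀ v w, v ≈ w → x v = x w}; in particular it preserves {x : V → E | ∀ v ∈ S, x v = x (φS v)}, since this set contains that synchrony space and is generated by it. -/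
namespace Relation

theorem EqvGen.map {α β : Type*} {r : α → α → Prop} {s : β → β → Prop} (g : α → β)
    (h : ∀ a b, r a b → EqvGen s (g a) (g b)) {a b : α} (hab : EqvGen r a b) :
    EqvGen s (g a) (g b) :=
  ((EqvGen.is_equivalence s).comap g).eqvGen_iff.mp (EqvGen.mono h a b hab)

end Relation

open Relation

section Synchrony

variable {V : Type*}

def IsBalanced {ι : Type*} (σ : ι → V → V) (R : V → V → Prop) : Prop :=
  ∀ j v w, R v w → R (σ j v) (σ j w)

def synchronySpace (R : V → V → Prop) (E : Type*) : Set (V → E) :=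
  {x | ∀ v w, R v w → x v = x w}

theorem isBalanced_eqvGen {ι : Type*} {σ : ι → V → V} {r : V → V → Prop}
    (h : ∀ j v w, r v w → EqvGen r (σ j v) (σ j w)) : IsBalanced σ (EqvGen r) :=
  fun j _ _ => EqvGen.map (σ j) (h j)

theorem synchronySpace_eqvGen (r : V → V → Prop) (E : Type*) :
    synchronySpace (EqvGen r) E = synchronySpace r E := by
  ext x
  refine ⟨fun hx v w hvw => hx v w (.rel v w hvw), fun hx v w hvw => ?_⟩
  exact (eq_equivalence.comap x).eqvGen_iff.mp (EqvGen.mono (fun a b hab => hx a b hab) v w hvw)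

theorem IsBalanced.networkMap_mem_synchronySpace {m : ℕ} {σ : Fin m → V → V}
    {R : V → V → Prop} (hR : IsBalanced σ R) {E : Type*} (f : (Fin m → E) → E) {x : V → E}
    (hx : x ∈ synchronySpace R E) : networkMap σ f x ∈ synchronySpace R E :=
  fun v w hvw => congrArg f (funext fun j => hx _ _ (hR j v w hvw))

end Synchrony

section InteriorSymmetry

variable {V : Type*} {S : Set V} {φS : V → V}

def interiorRel (S : Set V) (φS : V → V) (v w : V) : Prop :=
  v ∈ S ∧ w = φS v

theorem synchronySpace_interiorRel (E : Type*) :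
    synchronySpace (interiorRel S φS) E = {x : V → E | ∀ v ∈ S, x v = x (φS v)} := by
  ext x
  simp [synchronySpace, interiorRel]

theorem eqvGen_interiorRel_apply_self (h1 : ∀ v ∉ S, φS v = v) (u : V) :
    EqvGen (interiorRel S φS) u (φS u) := by
  by_cases hu : u ∈ S
  · exact .rel _ _ ⟨hu, rfl⟩
  · rw [h1 u hu]
    exact .refl u

theorem eqvGen_interiorRel_map (h1 : ∀ v ∉ S, φS v = v) {g : V → V}
    (hg : ∀ v ∈ S, φS (g v) = g (φS v)) {v w : V} (hvw : interiorRel S φS v w) :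
    EqvGen (interiorRel S φS) (g v) (g w) := by
  obtain ⟨hv, rfl⟩ := hvw
  rw [← hg v hv]
  exact eqvGen_interiorRel_apply_self h1 (g v)

end InteriorSymmetry

theorem interior_symmetry_balanced_general {V : Type*} {m : ℕ} (σ : Fin m → V → V)
    (S : Set V) (φS : V → V)
    (h1 : ∀ v ∉ S, φS v = v)
    (h3 : ∀ v ∈ S, ∀ j : Fin m, φS (σ j v) = σ j (φS v))
    (r : V → V → Prop) (hrdef : ∀ v w, r v w ↔ (v ∈ S ∧ w = φS v)) :
    (∀ (j : Fin m) (v w : V),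
        Relation.EqvGen r v w → Relation.EqvGen r (σ j v) (σ j w)) ∧
    (∀ (E : Type*) (f : (Fin m → E) → E),
      (∀ x ∈ {x : V → E | ∀ v w, Relation.EqvGen r v w → x v = x w},
        networkMap σ f x ∈
          {x : V → E | ∀ v w, Relation.EqvGen r v w → x v = x w}) ∧
      (∀ x ∈ {x : V → E | ∀ v ∈ S, x v = x (φS v)},
        networkMap σ f x ∈ {x : V → E | ∀ v ∈ S, x v = x (φS v)})) := by
  obtain rfl : r = interiorRel S φS := funext₂ fun v w => propext (hrdef v w)
  have hbal : IsBalanced σ (EqvGen (interiorRel S φS)) :=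
    isBalanced_eqvGen fun j _ _ => eqvGen_interiorRel_map h1 fun v hv => h3 v hv j
  refine ⟨hbal, fun E f => ⟨fun x hx => hbal.networkMap_mem_synchronySpace f hx, ?_⟩⟩
  rw [← synchronySpace_interiorRel, ← synchronySpace_eqvGen]
  exact fun x hx => hbal.networkMap_mem_synchronySpace f hx

/-- Interior symmetry yields robust synchrony: if `φS` is an interior symmetry
of a set `S` of cells, then the equivalence closure `≈` of the relation
`r v w ↔ v ∈ S ∧ w = φS v` is balanced; consequently every network map
preserves the synchrony space of `≈`, and in particular also the set
`{x | ∀ v ∈ S, x v = x (φS v)}`. -/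
theorem interior_symmetry_balanced {V : Type*} {m : ℕ} (σ : Fin m → V → V)
    (S : Set V) (φS : V → V)
    (h1 : ∀ v ∉ S, φS v = v)
    (h2 : ∀ v ∈ S, φS v ∈ S)
    (h3 : ∀ v ∈ S, ∀ j : Fin m, φS (σ j v) = σ j (φS v))
    (r : V → V → Prop) (hrdef : ∀ v w, r v w ↔ (v ∈ S ∧ w = φS v)) :
    (∀ (j : Fin m) (v w : V),
        Relation.EqvGen r v w → Relation.EqvGen r (σ j v) (σ j w)) ∧
    (∀ (E : Type*) (f : (Fin m → E) → E),
      (∀ x ∈ {x : V → E | ∀ v w, Relation.EqvGen r v w → x v = x w},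
        networkMap σ f x ∈
          {x : V → E | ∀ v w, Relation.EqvGen r v w → x v = x w}) ∧
      (∀ x ∈ {x : V → E | ∀ v ∈ S, x v = x (φS v)},
        networkMap σ f x ∈ {x : V → E | ∀ v ∈ S, x v = x (φS v)})) :=
  interior_symmetry_balanced_general σ S φS h1 h3 r hrdef
end
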